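/- arXiv:2106.08991 — 8 statements merged into one kernel-verified Lean document; each statement's English description precedes it below -/
import Mathlib

section
/- If i ∈ {0,1}^n is not a nested sequence (i.e., not of the form 1^k 0^{n−k}), then the set consisting of (i,1) together with the extended nested sequences (1^j 0^{n−j},1) for which its nested coordinate a_j is nonzero is a minimally linearly dependent subset of ℝ^{n+1} (i.e., it is linearly dependent but every proper subset is linearly independent). -/
/-- The nested sequence `1^k 0^{n-k}` viewed as a vector in `ℝⁿ`. -/
def nested (n k : ℕ) : Fin n → ℝ := fun j => if (j : ℕ) < k then 1 else 0

/-- Extension of `i` used to define nested coordinates. -/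
def extSeq {n : ℕ} (i : Fin n → ℝ) : ℕ → ℝ :=
  fun t => if t = 0 then 1 else if h : t - 1 < n then i ⟨t - 1, h⟩ else 0

/-- Nested coordinates `a_0 = 1 - i_1`, `a_j = i_j - i_{j+1}`, `a_n = i_n`. -/
def coefA {n : ℕ} (i : Fin n → ℝ) (j : Fin (n+1)) : ℝ :=
  extSeq i (j : ℕ) - extSeq i ((j : ℕ) + 1)

/-- The set consisting of `(i,1)` and the extended nested sequences with nonzero
coefficient. -/
def circuitSet {n : ℕ} (i : Fin n → ℝ) : Set (Fin (n+1) → ℝ) :=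
  {Fin.snoc i (1 : ℝ)} ∪
    {v | ∃ j : Fin (n+1), coefA i j ≠ 0 ∧ v = Fin.snoc (nested n (j : ℕ)) (1 : ℝ)}

namespace Stmt5Aux

open Finset Submodule

/-- The extended nested vectors. -/
def V (n : ℕ) (j : Fin (n+1)) : Fin (n+1) → ℝ := Fin.snoc (nested n (j : ℕ)) 1

lemma telescope (f : ℕ → ℝ) {a b : ℕ} (h : a ≤ b) :
    ∑ j ∈ Finset.Ico a b, (f j - f (j+1)) = f a - f b := by
  rw [Finset.sum_Ico_eq_sub _ h, Finset.sum_range_sub' f, Finset.sum_range_sub' f]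
  ring

lemma extSeq_zero {n : ℕ} (i : Fin n → ℝ) : extSeq i 0 = 1 := rfl

lemma extSeq_top {n : ℕ} (i : Fin n → ℝ) : extSeq i (n+1) = 0 := by
  simp [extSeq]

lemma extSeq_succ {n : ℕ} (i : Fin n → ℝ) (s : Fin n) : extSeq i ((s : ℕ)+1) = i s := by
  simp [extSeq]

/-- key identity: `(i,1)` decomposes along the nested vectors with coefficients `coefA`. -/
lemma key {n : ℕ} (i : Fin n → ℝ) :
    Fin.snoc i (1:ℝ) = ∑ j : Fin (n+1), coefA i j • V n j := by
  funext t
  rw [Finset.sum_apply]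
  induction t using Fin.lastCases with
  | last =>
    have h1 : ∀ j : Fin (n+1),
        (coefA i j • V n j) (Fin.last n) = extSeq i (j:ℕ) - extSeq i ((j:ℕ)+1) := by
      intro j
      simp [V, coefA, Fin.snoc_last]
    rw [Fin.snoc_last, Finset.sum_congr rfl (fun j _ => h1 j),
      Fin.sum_univ_eq_sum_range (fun m => extSeq i m - extSeq i (m+1)) (n+1),
      Finset.sum_range_sub' (extSeq i) (n+1), extSeq_zero, extSeq_top]
    ring
  | cast s =>
    have h1 : ∀ j : Fin (n+1),
        (coefA i j • V n j) (Fin.castSucc s)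
          = (fun m : ℕ => if (s:ℕ) < m then extSeq i m - extSeq i (m+1) else 0) (j:ℕ) := by
      intro j
      by_cases h : (s:ℕ) < (j:ℕ)
      · simp [V, coefA, Fin.snoc_castSucc, nested, h]
      · simp [V, coefA, Fin.snoc_castSucc, nested, h]
    rw [Fin.snoc_castSucc, Finset.sum_congr rfl (fun j _ => h1 j),
      Fin.sum_univ_eq_sum_range (fun m => if (s:ℕ) < m then extSeq i m - extSeq i (m+1) else 0)
        (n+1)]
    have hsub : Finset.Ico ((s:ℕ)+1) (n+1) ⊆ Finset.range (n+1) := by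
      intro m hm
      rw [Finset.mem_Ico] at hm
      exact Finset.mem_range.mpr hm.2
    rw [← Finset.sum_subset hsub (by
      intro m hm hm'
      rw [Finset.mem_range] at hm
      rw [Finset.mem_Ico, not_and_or] at hm'
      have : ¬ ((s:ℕ) < m) := by omega
      simp [this])]
    have := Finset.sum_congr rfl (fun m hm => by
      rw [Finset.mem_Ico] at hm
      have : (s:ℕ) < m := hm.1
      simp only [if_pos this] :
      ∀ m ∈ Finset.Ico ((s:ℕ)+1) (n+1),
        (if (s:ℕ) < m then extSeq i m - extSeq i (m+1) else 0) = extSeq i m - extSeq i (m+1))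
    rw [this, telescope (extSeq i) (by omega : (s:ℕ)+1 ≤ n+1), extSeq_succ, extSeq_top]
    ring

lemma single_eq_last {n : ℕ} :
    (fun j => if Fin.last n = j then (1:ℝ) else 0) = V n 0 := by
  funext u
  induction u using Fin.lastCases with
  | last => simp [V, Fin.snoc_last]
  | cast w =>
    have : Fin.last n ≠ Fin.castSucc w := (Fin.castSucc_lt_last w).ne'
    simp [V, Fin.snoc_castSucc, nested, this]

lemma single_eq_sub {n : ℕ} (s : Fin n) :
    (fun j => if Fin.castSucc s = j then (1:ℝ) else 0) = V n s.succ - V n s.castSucc := by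
  funext u
  induction u using Fin.lastCases with
  | last =>
    have : Fin.castSucc s ≠ Fin.last n := (Fin.castSucc_lt_last s).ne
    simp [V, Fin.snoc_last, this]
  | cast w =>
    simp only [Pi.sub_apply, V, Fin.snoc_castSucc, nested, Fin.val_succ, Fin.coe_castSucc]
    by_cases h : (w:ℕ) = (s:ℕ)
    · have he : Fin.castSucc s = Fin.castSucc w := by
        ext; exact h.symm
      have h1 : (w:ℕ) < (s:ℕ) + 1 := by omega
      have h2 : ¬ ((w:ℕ) < (s:ℕ)) := by omega
      simp [he, h1, h2]
    · have he : Fin.castSucc s ≠ Fin.castSucc w := by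
        intro hc
        exact h (by
          have := congrArg Fin.val hc
          simpa using this.symm)
      by_cases hlt : (w:ℕ) < (s:ℕ)
      · have h1 : (w:ℕ) < (s:ℕ) + 1 := by omega
        simp [he, h1, hlt]
      · have h1 : ¬ ((w:ℕ) < (s:ℕ) + 1) := by omega
        simp [he, h1, hlt]

lemma V_span (n : ℕ) : ⊤ ≤ Submodule.span ℝ (Set.range (V n)) := by
  intro x _
  rw [pi_eq_sum_univ x]
  refine Submodule.sum_mem _ (fun t _ => Submodule.smul_mem _ _ ?_)
  induction t using Fin.lastCases with
  | last =>
    rw [single_eq_last]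
    exact Submodule.subset_span ⟨0, rfl⟩
  | cast s =>
    rw [single_eq_sub s]
    exact Submodule.sub_mem _ (Submodule.subset_span ⟨s.succ, rfl⟩)
      (Submodule.subset_span ⟨s.castSucc, rfl⟩)

lemma linIndep_mono {M : Type*} [AddCommGroup M] [Module ℝ M] {t s : Set M} (h : t ⊆ s)
    (hs : LinearIndependent ℝ (fun x : s => (x : M))) :
    LinearIndependent ℝ (fun x : t => (x : M)) :=
  LinearIndepOn.mono (v := id) hs h

lemma to_range {ι M : Type*} [AddCommGroup M] [Module ℝ M] {f : ι → M}
    (hf : LinearIndependent ℝ f) : LinearIndependent ℝ (fun x : Set.range f => (x : M)) :=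
  (linearIndepOn_id_range_iff hf.injective).mpr hf

/-- The nested vectors form a basis of `ℝ^{n+1}`. -/
noncomputable def bV (n : ℕ) : Module.Basis (Fin (n+1)) ℝ (Fin (n+1) → ℝ) :=
  basisOfTopLeSpanOfCardEqFinrank (V n) (V_span n)
    (by simp [Module.finrank_fintype_fun_eq_card])

lemma coe_bV (n : ℕ) : ⇑(bV n) = V n :=
  coe_basisOfTopLeSpanOfCardEqFinrank _ _ _

lemma repr_snoc {n : ℕ} (i : Fin n → ℝ) :
    ⇑((bV n).repr (Fin.snoc i (1:ℝ))) = coefA i := by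
  rw [key i]
  calc ⇑((bV n).repr (∑ j : Fin (n+1), coefA i j • V n j))
      = ⇑((bV n).repr (∑ j : Fin (n+1), coefA i j • (bV n) j)) := by rw [coe_bV]
    _ = coefA i := (bV n).repr_sum_self _

end Stmt5Aux

open Stmt5Aux Submodule in
/-- if `i` is binary and non-nested, then `(i,1)` together with the extended
nested sequences having nonzero nested coefficient forms a minimally linearly dependent
subset of `ℝ^{n+1}`. -/
theorem stmt_5 {n : ℕ} (i : Fin n → ℝ)
    (hbin : ∀ j, i j = 0 ∨ i j = 1)
    (hnon : ∀ k : ℕ, k ≤ n → i ≠ nested n k) :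
    ¬ LinearIndependent ℝ (fun v : circuitSet i => (v : Fin (n+1) → ℝ)) ∧
    ∀ T' : Set (Fin (n+1) → ℝ), T' ⊂ circuitSet i →
      LinearIndependent ℝ (fun v : T' => (v : Fin (n+1) → ℝ)) := by
  have hx_ne : ∀ j : Fin (n+1), V n j ≠ Fin.snoc i (1:ℝ) := by
    intro j h
    apply hnon (j:ℕ) (Nat.lt_succ_iff.mp j.isLt)
    funext t
    have h2 := congrFun h (Fin.castSucc t)
    simpa [V, Fin.snoc_castSucc] using h2.symm
  constructor
  · intro h
    set x : Fin (n+1) → ℝ := Fin.snoc i (1:ℝ) with hxdef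
    have hxmem : x ∈ circuitSet i := Or.inl rfl
    have hspan : x ∈ Submodule.span ℝ (circuitSet i \ {x}) := by
      have hsum : (∑ j : Fin (n+1), coefA i j • V n j)
          ∈ Submodule.span ℝ (circuitSet i \ {x}) := by
        refine Submodule.sum_mem _ (fun j _ => ?_)
        by_cases hc : coefA i j = 0
        · simp [hc]
        · exact Submodule.smul_mem _ _
            (Submodule.subset_span ⟨Or.inr ⟨j, hc, rfl⟩, hx_ne j⟩)
      rw [← key i] at hsum
      rwa [← hxdef] at hsum
    have himg : (Subtype.val '' {y : circuitSet i | (y : Fin (n+1) → ℝ) ≠ x})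
        = circuitSet i \ {x} := by
      ext z
      constructor
      · rintro ⟨⟨z, hz⟩, hne, rfl⟩
        exact ⟨hz, hne⟩
      · rintro ⟨hz, hne⟩
        exact ⟨⟨z, hz⟩, hne, rfl⟩
    have hnm := h.notMem_span_image
      (s := {y : circuitSet i | (y : Fin (n+1) → ℝ) ≠ x}) (x := ⟨x, hxmem⟩) (by simp)
    rw [himg] at hnm
    exact hnm hspan
  · intro T' hT'
    obtain ⟨x₀, hx₀cs, hx₀T⟩ := Set.exists_of_ssubset hT'
    by_cases hxT : Fin.snoc i (1:ℝ) ∈ T'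
    · have hx₀ne : x₀ ≠ Fin.snoc i (1:ℝ) := fun h => hx₀T (h ▸ hxT)
      obtain ⟨j₀, hj₀, hx₀eq⟩ : ∃ j, coefA i j ≠ 0 ∧ x₀ = V n j := by
        rcases hx₀cs with h | h
        · exact absurd h hx₀ne
        · exact h
      set s : Set (Fin (n+1) → ℝ) := V n '' {j | j ≠ j₀} with hsdef
      have hs_indep : LinearIndependent ℝ (fun v : s => (v : Fin (n+1) → ℝ)) := by
        refine linIndep_mono ?_ (to_range (bV n).linearIndependent)
        rw [coe_bV]
        exact Set.image_subset_range _ _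
      have hx_not : Fin.snoc i (1:ℝ) ∉ Submodule.span ℝ s := by
        intro hmem
        rw [hsdef, ← coe_bV n] at hmem
        have hsupp := (bV n).mem_span_image.mp hmem
        have h0 : ((bV n).repr (Fin.snoc i (1:ℝ))) j₀ = 0 := by
          by_contra h
          exact (hsupp (Finsupp.mem_support_iff.mpr h)) rfl
        rw [show ((bV n).repr (Fin.snoc i (1:ℝ))) j₀ = coefA i j₀ from
          congrFun (repr_snoc i) j₀] at h0
        exact hj₀ h0
      refine linIndep_mono ?_ (LinearIndepOn.id_insert hs_indep hx_not)
      intro y hyT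
      rcases hT'.subset hyT with h | ⟨j, hj, hyeq⟩
      · exact Set.mem_insert_iff.mpr (Or.inl h)
      · refine Set.mem_insert_iff.mpr (Or.inr ⟨j, ?_, hyeq.symm⟩)
        intro hjj
        apply hx₀T
        rw [hx₀eq, ← hjj]
        show Fin.snoc (nested n (j:ℕ)) (1:ℝ) ∈ T'
        exact hyeq ▸ hyT
    · have hsub : T' ⊆ Set.range (V n) := by
        intro y hy
        rcases hT'.subset hy with h | ⟨j, _, hyeq⟩
        · exact absurd (h ▸ hy) hxT
        · exact ⟨j, hyeq.symm⟩
      refine linIndep_mono ?_ (to_range (bV n).linearIndependent)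
      rw [coe_bV]
      exact hsub
end

section
/- Under the hypotheses of the previous equilibrium setting, if Σ_{k∈C} a_k R_k = 0 for a circuit C with vanishing coefficients (a_k), and y* is an equilibrium virus vector positive on C, then for all sufficiently small α ∈ ℝ the vector ȳ defined by ȳ_k = y*_k + α a_k for k ∈ C and ȳ_k = y*_k otherwise is also an equilibrium virus vector (with the same x* and z*): it satisfies Σ_k (1 − k_j) ȳ_k = Σ_k (1 − k_j) y*_k for all j, Σ_k R_k ȳ_k = Σ_k R_k y*_k, and ȳ_k ≥ 0. -/
/-- The real value of a boolean allele. -/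
def tv : Bool → ℝ := fun b => if b then 1 else 0

lemma sum_ite_aux {n : ℕ} (C : Finset (Fin n → Bool)) (f g : (Fin n → Bool) → ℝ) :
    ∑ k : Fin n → Bool, f k * (if k ∈ C then g k else 0) = ∑ k ∈ C, f k * g k := by
  rw [← Finset.sum_subset (Finset.subset_univ C)]
  · exact Finset.sum_congr rfl fun k hk => by simp [hk]
  · intro k _ hk; simp [hk]

/-- if `Σ_{k∈C} a_k R_k = 0` for a circuit `C` with vanishing coefficients
and `y*` is an equilibrium virus vector positive on `C`, then for all sufficiently small
`α` the perturbed vector `ȳ_k = y*_k + α a_k` on `C` (unchanged off `C`) satisfies the same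
equilibrium linear constraints and is nonnegative. -/
theorem stmt_9 {n : ℕ} (R : (Fin n → Bool) → ℝ)
    (y : (Fin n → Bool) → ℝ) (hy : ∀ k, 0 ≤ y k)
    (C : Finset (Fin n → Bool)) (hposC : ∀ k ∈ C, 0 < y k)
    (a : (Fin n → Bool) → ℝ)
    (ha1 : ∀ j : Fin n, ∑ k ∈ C, a k * tv (k j) = 0)
    (ha2 : ∑ k ∈ C, a k = 0)
    (hAR : ∑ k ∈ C, a k * R k = 0)
    (α : ℝ)
    (hα : ∀ k ∈ C, a k ≠ 0 → |α| ≤ y k / |a k|)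
    (ybar : (Fin n → Bool) → ℝ)
    (hybar : ∀ k, ybar k = y k + α * (if k ∈ C then a k else 0)) :
    (∀ j : Fin n, ∑ k : Fin n → Bool, (1 - tv (k j)) * ybar k
        = ∑ k : Fin n → Bool, (1 - tv (k j)) * y k) ∧
    (∑ k : Fin n → Bool, R k * ybar k = ∑ k : Fin n → Bool, R k * y k) ∧
    (∀ k, 0 ≤ ybar k) := by
  have key : ∀ f : (Fin n → Bool) → ℝ, (∑ k ∈ C, a k * f k = 0) →
      ∑ k : Fin n → Bool, f k * ybar k = ∑ k : Fin n → Bool, f k * y k := by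
    intro f hf
    simp only [hybar, mul_add]
    rw [Finset.sum_add_distrib]
    have : ∑ k : Fin n → Bool, f k * (α * if k ∈ C then a k else 0)
        = α * ∑ k ∈ C, a k * f k := by
      calc ∑ k : Fin n → Bool, f k * (α * if k ∈ C then a k else 0)
          = α * ∑ k : Fin n → Bool, f k * (if k ∈ C then a k else 0) := by
            rw [Finset.mul_sum]; exact Finset.sum_congr rfl fun k _ => by ring
        _ = α * ∑ k ∈ C, f k * a k := by rw [sum_ite_aux]
        _ = α * ∑ k ∈ C, a k * f k := by simp [mul_comm]
    rw [this, hf]; ring_nf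
  refine ⟨fun j => key _ ?_, key _ hAR, ?_⟩
  · have := ha1 j
    have h2 := ha2
    simp only [mul_sub, mul_one, Finset.sum_sub_distrib] at *
    rw [this, h2]; simp
  · intro k
    rw [hybar k]
    by_cases hk : k ∈ C
    · simp only [hk, if_true]
      by_cases hak : a k = 0
      · simp [hak, hy k]
      · have h1 : |α| ≤ y k / |a k| := hα k hk hak
        have h2 : |α * a k| ≤ y k := by
          rw [abs_mul]
          calc |α| * |a k| ≤ (y k / |a k|) * |a k| := by
                exact mul_le_mul_of_nonneg_right h1 (abs_nonneg _)
            _ = y k := div_mul_cancel₀ _ (abs_ne_zero.mpr hak)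
        nlinarith [neg_abs_le (α * a k)]
    · simp [hk, hy k]
end

section
/- Suppose the fitness landscape on {0,1}^n is multiplicative: R_i = R_0 · Π_{j : i_j = 1} f_j with 0 < f_j < 1 for all j. Then for every non-nested sequence i with power-notation decomposition 0 ≤ m_1 < p_1 < m_2 < ⋯ < p_s < m_{s+1} ≤ n, the nested-circuit linear form A_i := −R_i + Σ_{j=1}^{s+1} R_{1^{m_j} 0^{n−m_j}} − Σ_{j=1}^{s} R_{1^{p_j} 0^{n−p_j}} is strictly positive. -/
/-- The nested binary sequence `1^k 0^{n-k}`. -/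
def nestedBool (n k : ℕ) : Fin n → Bool := fun j => decide ((j : ℕ) < k)

/-- under a multiplicative fitness landscape
`R_i = R₀ ∏_{j : i_j = 1} f_j` with `0 < f_j < 1`, for every non-nested sequence `i` with
power-notation decomposition `m_1 < p_1 < ⋯ < p_s < m_{s+1} ≤ n`, the nested-circuit linear
form `A_i = -R_i + Σ_{j=1}^{s+1} R_{1^{m_j}0^{n-m_j}} - Σ_{j=1}^{s} R_{1^{p_j}0^{n-p_j}}`
is strictly positive. -/
theorem stmt_12 {n s : ℕ} (hs : 1 ≤ s)
    (m : Fin (s+1) → ℕ) (p : Fin s → ℕ)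
    (hmp : ∀ j : Fin s, m j.castSucc < p j ∧ p j < m j.succ)
    (hlast : m (Fin.last s) ≤ n)
    (i : Fin n → Bool)
    (hi : ∀ t : Fin n,
      i t = decide ((t : ℕ) < m 0 ∨ ∃ j : Fin s, p j ≤ (t : ℕ) ∧ (t : ℕ) < m j.succ))
    (R₀ : ℝ) (hR₀ : 0 < R₀) (f : Fin n → ℝ) (hf : ∀ j, 0 < f j ∧ f j < 1)
    (R : (Fin n → Bool) → ℝ)
    (hR : ∀ k, R k = R₀ * ∏ j, (if k j then f j else 1)) :
    0 < -R i + (∑ j : Fin (s+1), R (nestedBool n (m j)))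
        - ∑ j : Fin s, R (nestedBool n (p j)) := by
  classical
  have hm : StrictMono m := by
    rw [Fin.strictMono_iff_lt_succ]
    exact fun j => lt_trans (hmp j).1 (hmp j).2
  have hmle : ∀ j : Fin (s+1), m j ≤ n :=
    fun j => le_trans (hm.monotone (Fin.le_last j)) hlast
  -- extended fitness coefficients
  set f' : ℕ → ℝ := fun t => if h : t < n then f ⟨t, h⟩ else 1 with hf'def
  have hf'pos : ∀ t, 0 < f' t := by
    intro t; simp only [hf'def]; split
    · exact (hf _).1
    · norm_num
  have hf'le : ∀ t, f' t ≤ 1 := by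
    intro t; simp only [hf'def]; split
    · exact (hf _).2.le
    · norm_num
  have hf'lt : ∀ t, t < n → f' t < 1 := by
    intro t ht; simp only [hf'def, dif_pos ht]; exact (hf _).2
  set G : ℕ → ℝ := fun k => ∏ t ∈ Finset.range k, f' t with hGdef
  have hGpos : ∀ k, 0 < G k := fun k => Finset.prod_pos (fun t _ => hf'pos t)
  have hQpos : ∀ a b : ℕ, 0 < ∏ t ∈ Finset.Ico a b, f' t :=
    fun a b => Finset.prod_pos (fun t _ => hf'pos t)
  have hQle : ∀ a b : ℕ, (∏ t ∈ Finset.Ico a b, f' t) ≤ 1 :=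
    fun a b => Finset.prod_le_one (fun t _ => (hf'pos t).le) (fun t _ => hf'le t)
  have hQlt : ∀ a b : ℕ, a < b → b ≤ n → (∏ t ∈ Finset.Ico a b, f' t) < 1 := by
    intro a b hab hbn
    rw [Finset.prod_eq_prod_Ico_succ_bot hab]
    calc f' a * ∏ t ∈ Finset.Ico (a+1) b, f' t
        ≤ f' a * 1 := mul_le_mul_of_nonneg_left (hQle _ _) (hf'pos a).le
      _ = f' a := mul_one _
      _ < 1 := hf'lt a (lt_of_lt_of_le hab hbn)
  have hGsplit : ∀ a b : ℕ, a ≤ b → G b = G a * ∏ t ∈ Finset.Ico a b, f' t := by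
    intro a b hab
    simp only [hGdef, Finset.range_eq_Ico]
    exact (Finset.prod_Ico_consecutive _ (Nat.zero_le a) hab).symm
  -- value of R on nested sequences
  have hRnest : ∀ k, k ≤ n → R (nestedBool n k) = R₀ * G k := by
    intro k hk
    rw [hR]
    congr 1
    have h1 : ∀ j : Fin n, (if nestedBool n k j then f j else 1)
        = (fun t => if t < k then f' t else 1) (j : ℕ) := by
      intro j
      simp [nestedBool, hf'def, j.isLt]
    rw [Finset.prod_congr rfl (fun j _ => h1 j),
      Fin.prod_univ_eq_prod_range (fun t => if t < k then f' t else 1) n,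
      ← Finset.prod_filter]
    congr 1
    ext t
    simp only [Finset.mem_filter, Finset.mem_range]
    omega
  -- value of R on i
  set S : Finset ℕ := Finset.range (m 0) ∪
      Finset.univ.biUnion (fun j : Fin s => Finset.Ico (p j) (m j.succ)) with hSdef
  have hfilter : (Finset.range n).filter
      (fun t => t < m 0 ∨ ∃ j : Fin s, p j ≤ t ∧ t < m j.succ) = S := by
    ext t
    simp only [hSdef, Finset.mem_filter, Finset.mem_range, Finset.mem_union,
      Finset.mem_biUnion, Finset.mem_univ, Finset.mem_Ico, true_and]
    constructor
    · rintro ⟨-, h⟩; exact h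
    · rintro (h | ⟨j, h1, h2⟩)
      · exact ⟨lt_of_lt_of_le h (hmle 0), Or.inl h⟩
      · exact ⟨lt_of_lt_of_le h2 (hmle j.succ), Or.inr ⟨j, h1, h2⟩⟩
  have hRi : R i = R₀ * ∏ t ∈ S, f' t := by
    rw [hR]
    congr 1
    have h1 : ∀ j : Fin n, (if i j then f j else 1)
        = (fun t => if (t < m 0 ∨ ∃ jj : Fin s, p jj ≤ t ∧ t < m jj.succ)
            then f' t else 1) (j : ℕ) := by
      intro j
      rw [hi j]
      simp [hf'def, j.isLt]
    rw [Finset.prod_congr rfl (fun j _ => h1 j),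
      Fin.prod_univ_eq_prod_range
        (fun t => if (t < m 0 ∨ ∃ jj : Fin s, p jj ≤ t ∧ t < m jj.succ)
          then f' t else 1) n,
      ← Finset.prod_filter, hfilter]
  -- split the product over S
  have hdisj1 : Disjoint (Finset.range (m 0))
      (Finset.univ.biUnion fun j : Fin s => Finset.Ico (p j) (m j.succ)) := by
    rw [Finset.disjoint_left]
    intro t ht ht'
    simp only [Finset.mem_range] at ht
    simp only [Finset.mem_biUnion, Finset.mem_univ, Finset.mem_Ico, true_and] at ht'
    obtain ⟨j, h1, h2⟩ := ht'
    have h3 : m 0 ≤ m j.castSucc := hm.monotone (Fin.zero_le _)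
    have h4 := (hmp j).1
    omega
  have hdisj2 : Set.PairwiseDisjoint ((Finset.univ : Finset (Fin s)) : Set (Fin s))
      (fun j : Fin s => Finset.Ico (p j) (m j.succ)) := by
    have key : ∀ a b : Fin s, a < b →
        Disjoint (Finset.Ico (p a) (m a.succ)) (Finset.Ico (p b) (m b.succ)) := by
      intro a b hab
      rw [Finset.disjoint_left]
      intro t ht ht'
      simp only [Finset.mem_Ico] at ht ht'
      have h1 : m a.succ ≤ m b.castSucc := by
        apply hm.monotone
        simp only [Fin.le_def, Fin.coe_castSucc, Fin.val_succ]
        exact hab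
      have h2 := (hmp b).1
      omega
    intro a _ b _ hab
    rcases lt_or_gt_of_ne hab with h | h
    · exact key a b h
    · exact (key b a h).symm
  have hSprod : ∏ t ∈ S, f' t
      = G (m 0) * ∏ j : Fin s, ∏ t ∈ Finset.Ico (p j) (m j.succ), f' t := by
    rw [hSdef, Finset.prod_union hdisj1, Finset.prod_biUnion hdisj2]
  -- ℕ-indexed versions
  set m' : ℕ → ℕ := fun k => m ⟨min k s, Nat.lt_succ_of_le (min_le_right _ _)⟩ with hm'def
  set p' : ℕ → ℕ := fun k => if h : k < s then p ⟨k, h⟩ else 0 with hp'def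
  have hm'eq : ∀ j : Fin (s+1), m' (j : ℕ) = m j := by
    intro j
    simp only [hm'def]
    exact congrArg m (Fin.ext (by simp [Nat.min_eq_left (Nat.lt_succ_iff.mp j.isLt)]))
  have hp'eq : ∀ j : Fin s, p' (j : ℕ) = p j := by
    intro j
    simp only [hp'def, dif_pos j.isLt]
  have hsucc : ∀ (k : ℕ) (h : k < s), m' (k+1) = m (⟨k, h⟩ : Fin s).succ := by
    intro k h
    simp only [hm'def]
    exact congrArg m (Fin.ext (by simp [Fin.val_succ, Nat.min_eq_left (Nat.succ_le_of_lt h)]))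
  have hcast : ∀ (k : ℕ) (h : k < s), m' k = m (⟨k, h⟩ : Fin s).castSucc := by
    intro k h
    simp only [hm'def]
    exact congrArg m (Fin.ext (by simp [Nat.min_eq_left (le_of_lt h)]))
  have hm'le : ∀ k, m' k ≤ n := by
    intro k
    exact hmle _
  have hchain : ∀ k, k < s → m' k < p' k ∧ p' k < m' (k+1) := by
    intro k h
    rw [hcast k h, hsucc k h, hp'def]
    simp only [dif_pos h]
    exact hmp ⟨k, h⟩
  set Q : ℕ → ℝ := fun k => ∏ t ∈ Finset.Ico (p' k) (m' (k+1)), f' t with hQdef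
  have hQk_pos : ∀ k, 0 < Q k := fun k => hQpos _ _
  have hQk_lt : ∀ k, k < s → Q k < 1 := by
    intro k h
    exact hQlt _ _ (hchain k h).2 (hm'le (k+1))
  -- rewrite the three terms of the goal
  have hS1 : ∑ j : Fin (s+1), R (nestedBool n (m j))
      = R₀ * ∑ k ∈ Finset.range (s+1), G (m' k) := by
    rw [← Fin.sum_univ_eq_sum_range (fun k => G (m' k)) (s+1), Finset.mul_sum]
    apply Finset.sum_congr rfl
    intro j _
    rw [hRnest _ (hmle j), hm'eq j]
  have hS2 : ∑ j : Fin s, R (nestedBool n (p j))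
      = R₀ * ∑ k ∈ Finset.range s, G (p' k) := by
    rw [← Fin.sum_univ_eq_sum_range (fun k => G (p' k)) s, Finset.mul_sum]
    apply Finset.sum_congr rfl
    intro j _
    have hpn : p j ≤ n := le_of_lt (lt_of_lt_of_le (hmp j).2 (hmle j.succ))
    rw [hRnest _ hpn, hp'eq j]
  have hPprod : ∏ j : Fin s, ∏ t ∈ Finset.Ico (p j) (m j.succ), f' t
      = ∏ k ∈ Finset.range s, Q k := by
    rw [← Fin.prod_univ_eq_prod_range Q s]
    apply Finset.prod_congr rfl
    intro j _
    simp only [hQdef]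
    rw [hp'eq j, hsucc (j : ℕ) j.isLt]
  have hm'0 : m' 0 = m 0 := by simpa using hm'eq 0
  have hRi' : R i = R₀ * (G (m' 0) * ∏ k ∈ Finset.range s, Q k) := by
    rw [hRi, hSprod, hPprod, hm'0]
  -- main inequality
  set H : ℕ → ℝ := fun k => G (m' 0) * ∏ l ∈ Finset.range k, Q l with hHdef
  have hHpos : ∀ k, 0 < H k :=
    fun k => mul_pos (hGpos _) (Finset.prod_pos fun l _ => hQk_pos l)
  have hC : ∀ k, k ≤ s → G (m' k) ≤ H k := by
    intro k
    induction k with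
    | zero => intro _; simp [hHdef]
    | succ k ih =>
      intro hk
      have hk' : k < s := hk
      have hch := hchain k hk'
      have e1 : G (m' (k+1)) = G (p' k) * Q k :=
        hGsplit _ _ (le_of_lt hch.2)
      have e2 : G (p' k) ≤ G (m' k) := by
        rw [hGsplit (m' k) (p' k) (le_of_lt hch.1)]
        calc G (m' k) * ∏ t ∈ Finset.Ico (m' k) (p' k), f' t
            ≤ G (m' k) * 1 := mul_le_mul_of_nonneg_left (hQle _ _) (hGpos _).le
          _ = G (m' k) := mul_one _
      have e3 : H (k+1) = H k * Q k := by
        simp only [hHdef, Finset.prod_range_succ, mul_assoc]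
      rw [e1, e3]
      have := ih (le_of_lt hk')
      nlinarith [hQk_pos k, hGpos (p' k)]
  have hGpH : ∀ k, k < s → G (p' k) < H k := by
    intro k hk
    have hch := hchain k hk
    have hpn : p' k ≤ n := le_of_lt (lt_of_lt_of_le hch.2 (hm'le (k+1)))
    have e1 : G (p' k) < G (m' k) := by
      rw [hGsplit (m' k) (p' k) (le_of_lt hch.1)]
      have := hQlt _ _ hch.1 hpn
      nlinarith [hGpos (m' k)]
    exact lt_of_lt_of_le e1 (hC k (le_of_lt hk))
  have key : ∑ k ∈ Finset.range s, G (p' k) * (1 - Q k)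
      < ∑ k ∈ Finset.range s, H k * (1 - Q k) := by
    apply Finset.sum_lt_sum_of_nonempty
    · exact Finset.nonempty_range_iff.mpr (by omega)
    · intro k hk
      rw [Finset.mem_range] at hk
      have h1 : (0:ℝ) < 1 - Q k := by linarith [hQk_lt k hk]
      exact mul_lt_mul_of_pos_right (hGpH k hk) h1
  have tel : ∑ k ∈ Finset.range s, H k * (1 - Q k)
      = G (m' 0) - G (m' 0) * ∏ k ∈ Finset.range s, Q k := by
    have e : ∀ k, H k * (1 - Q k) = H k - H (k+1) := by
      intro k
      have : H (k+1) = H k * Q k := by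
        simp only [hHdef, Finset.prod_range_succ, mul_assoc]
      rw [this]; ring
    rw [Finset.sum_congr rfl (fun k _ => e k), Finset.sum_range_sub' H s]
    simp [hHdef]
  have E1 : ∑ k ∈ Finset.range (s+1), G (m' k)
      = (∑ k ∈ Finset.range s, G (p' k) * Q k) + G (m' 0) := by
    rw [Finset.sum_range_succ' (fun k => G (m' k)) s]
    congr 1
    apply Finset.sum_congr rfl
    intro k hk
    rw [Finset.mem_range] at hk
    exact hGsplit _ _ (le_of_lt (hchain k hk).2)
  have E2 : ∑ k ∈ Finset.range s, G (p' k) * (1 - Q k)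
      = (∑ k ∈ Finset.range s, G (p' k)) - ∑ k ∈ Finset.range s, G (p' k) * Q k := by
    rw [← Finset.sum_sub_distrib]
    apply Finset.sum_congr rfl
    intro k _
    ring
  have main : G (m' 0) * (∏ k ∈ Finset.range s, Q k)
      + ∑ k ∈ Finset.range s, G (p' k)
      < ∑ k ∈ Finset.range (s+1), G (m' k) := by
    rw [E1]
    linarith [key, tel, E2]
  rw [hRi', hS1, hS2]
  have : -(R₀ * (G (m' 0) * ∏ k ∈ Finset.range s, Q k))
      + R₀ * ∑ k ∈ Finset.range (s+1), G (m' k)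
      - R₀ * ∑ k ∈ Finset.range s, G (p' k)
      = R₀ * ((∑ k ∈ Finset.range (s+1), G (m' k))
        - (G (m' 0) * (∏ k ∈ Finset.range s, Q k) + ∑ k ∈ Finset.range s, G (p' k))) := by
    ring
  rw [this]
  exact mul_pos hR₀ (by linarith [main])
end

section
/- In the base case s = 1, with i = 1^{m_1} 0^{p−m_1} 1^{m_2−p} 0^{n−m_2} (0 ≤ m_1 < p < m_2 ≤ n) and multiplicative fitness R_k = R_0 Π_{j: k_j=1} f_j with 0 < f_j < 1, one has the factorization −A_i = R_0 f_1⋯f_{m_1} (1 − f_{p+1}⋯f_{m_2})(f_{m_1+1}⋯f_p − 1), which is strictly negative. -/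
private lemma aux_prod_pos {n : ℕ} (f : Fin n → ℝ) (hf : ∀ j, 0 < f j)
    (c : Fin n → Prop) [DecidablePred c] :
    0 < ∏ j : Fin n, if c j then f j else 1 := by
  apply Finset.prod_pos
  intro j _
  split_ifs
  · exact hf j
  · norm_num

private lemma aux_prod_le_one {n : ℕ} (f : Fin n → ℝ) (hf : ∀ j, 0 < f j ∧ f j < 1)
    (c : Fin n → Prop) [DecidablePred c] :
    ∏ j : Fin n, (if c j then f j else 1) ≤ 1 := by
  apply Finset.prod_le_one
  · intro j _; split_ifs; exacts [(hf j).1.le, by norm_num]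
  · intro j _; split_ifs; exacts [(hf j).2.le, le_refl 1]

private lemma aux_prod_lt_one {n : ℕ} (f : Fin n → ℝ) (hf : ∀ j, 0 < f j ∧ f j < 1)
    (c : Fin n → Prop) [DecidablePred c] (j₀ : Fin n) (hj₀ : c j₀) :
    ∏ j : Fin n, (if c j then f j else 1) < 1 := by
  have h := Finset.mul_prod_erase Finset.univ (fun j => if c j then f j else 1)
    (Finset.mem_univ j₀)
  have hrest : ∏ j ∈ Finset.univ.erase j₀, (if c j then f j else 1) ≤ 1 := by
    apply Finset.prod_le_one
    · intro j _; split_ifs; exacts [(hf j).1.le, by norm_num]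
    · intro j _; split_ifs; exacts [(hf j).2.le, le_refl 1]
  have hrestpos : 0 < ∏ j ∈ Finset.univ.erase j₀, (if c j then f j else 1) := by
    apply Finset.prod_pos; intro j _; split_ifs; exacts [(hf j).1, by norm_num]
  calc ∏ j : Fin n, (if c j then f j else 1)
      = (if c j₀ then f j₀ else 1) * ∏ j ∈ Finset.univ.erase j₀, (if c j then f j else 1) :=
        h.symm
    _ ≤ (if c j₀ then f j₀ else 1) * 1 := by
        have hnn : 0 ≤ (if c j₀ then f j₀ else 1) := by
          rw [if_pos hj₀]; exact (hf j₀).1.le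
        exact mul_le_mul_of_nonneg_left hrest hnn
    _ < 1 := by rw [if_pos hj₀, mul_one]; exact (hf j₀).2

/-- base case `s = 1`: for `i = 1^{m_1}0^{p-m_1}1^{m_2-p}0^{n-m_2}`
(`m_1 < p < m_2 ≤ n`) and multiplicative fitness with `0 < f_j < 1`, the linear form
`A_i = -R_i + R_{1^{m_1}0^{n-m_1}} - R_{1^{p}0^{n-p}} + R_{1^{m_2}0^{n-m_2}}` satisfies
`-A_i = R₀ f_1⋯f_{m_1} (1 - f_{p+1}⋯f_{m_2})(f_{m_1+1}⋯f_p - 1) < 0`. -/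
theorem stmt_13 {n : ℕ} (m₁ p m₂ : ℕ)
    (h1 : m₁ < p) (h2 : p < m₂) (h3 : m₂ ≤ n)
    (R₀ : ℝ) (hR₀ : 0 < R₀) (f : Fin n → ℝ) (hf : ∀ j, 0 < f j ∧ f j < 1)
    (i : Fin n → Bool)
    (hi : ∀ t : Fin n, i t = decide ((t : ℕ) < m₁ ∨ (p ≤ (t : ℕ) ∧ (t : ℕ) < m₂)))
    (R : (Fin n → Bool) → ℝ)
    (hR : ∀ k, R k = R₀ * ∏ j, (if k j then f j else 1))
    (A : ℝ)
    (hA : A = -R i + R (nestedBool n m₁) - R (nestedBool n p) + R (nestedBool n m₂)) :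
    (-A = R₀ * (∏ j : Fin n, if (j : ℕ) < m₁ then f j else 1)
        * (1 - ∏ j : Fin n, if p ≤ (j : ℕ) ∧ (j : ℕ) < m₂ then f j else 1)
        * ((∏ j : Fin n, if m₁ ≤ (j : ℕ) ∧ (j : ℕ) < p then f j else 1) - 1))
    ∧ -A < 0 := by
  have hfpos : ∀ j, 0 < f j := fun j => (hf j).1
  set P₁ := ∏ j : Fin n, if (j : ℕ) < m₁ then f j else 1 with hP₁
  set P₂ := ∏ j : Fin n, if m₁ ≤ (j : ℕ) ∧ (j : ℕ) < p then f j else 1 with hP₂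
  set P₃ := ∏ j : Fin n, if p ≤ (j : ℕ) ∧ (j : ℕ) < m₂ then f j else 1 with hP₃
  have hRi : R i = R₀ * (P₁ * P₃) := by
    rw [hR, hP₁, hP₃, ← Finset.prod_mul_distrib]
    congr 1
    apply Finset.prod_congr rfl
    intro j _
    rw [hi j]
    simp only [decide_eq_true_eq]
    split_ifs <;> first | omega | ring
  have hRm₁ : R (nestedBool n m₁) = R₀ * P₁ := by
    rw [hR, hP₁]
    congr 1
    apply Finset.prod_congr rfl
    intro j _
    simp only [nestedBool, decide_eq_true_eq]
  have hRp : R (nestedBool n p) = R₀ * (P₁ * P₂) := by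
    rw [hR, hP₁, hP₂, ← Finset.prod_mul_distrib]
    congr 1
    apply Finset.prod_congr rfl
    intro j _
    simp only [nestedBool, decide_eq_true_eq]
    split_ifs <;> first | omega | ring
  have hRm₂ : R (nestedBool n m₂) = R₀ * (P₁ * P₂ * P₃) := by
    rw [hR, hP₁, hP₂, hP₃, ← Finset.prod_mul_distrib, ← Finset.prod_mul_distrib]
    congr 1
    apply Finset.prod_congr rfl
    intro j _
    simp only [nestedBool, decide_eq_true_eq]
    split_ifs <;> first | omega | ring
  have key : -A = R₀ * P₁ * (1 - P₃) * (P₂ - 1) := by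
    rw [hA, hRi, hRm₁, hRp, hRm₂]; ring
  refine ⟨key, ?_⟩
  rw [key]
  have hP₁pos : 0 < P₁ := aux_prod_pos f hfpos _
  have hP₃lt : P₃ < 1 := by
    have hpn : p < n := lt_of_lt_of_le h2 h3
    exact aux_prod_lt_one f hf _ ⟨p, hpn⟩ ⟨le_refl p, h2⟩
  have hP₂lt : P₂ < 1 := by
    have hmn : m₁ < n := lt_of_lt_of_le (h1.trans h2) h3
    exact aux_prod_lt_one f hf _ ⟨m₁, hmn⟩ ⟨le_refl m₁, h1⟩
  have h13 : 0 < 1 - P₃ := by linarith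
  exact mul_neg_of_pos_of_neg (mul_pos (mul_pos hR₀ hP₁pos) h13) (by linarith)
end

section
/- Suppose the fitness landscape has pairwise interactions: R_i = R_0 − c·i + Σ_{j<k} i_j i_k B_{jk}. For i = 1^{m_1} 0^{p−m_1} 1^{m_2−p} 0^{n−m_2} with one (0,1) string (0 ≤ m_1 < p < m_2 ≤ n), the nested-circuit linear form satisfies A_i = Σ_{j=m_1+1}^{p} Σ_{k=p+1}^{m_2} B_{jk}. In particular A_i > 0 whenever all B_{jk} > 0. -/
/-- under a pairwise-interaction fitness landscape
`R_i = R₀ - c·i + Σ_{j<k} i_j i_k B_{jk}`, for `i = 1^{m_1}0^{p-m_1}1^{m_2-p}0^{n-m_2}`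
(one `(0,1)` string, `m_1 < p < m_2 ≤ n`) the nested-circuit linear form satisfies
`A_i = Σ_{j=m_1+1}^{p} Σ_{k=p+1}^{m_2} B_{jk}`; in particular `A_i > 0` whenever all
`B_{jk} > 0`. -/
theorem stmt_14 {n : ℕ} (m₁ p m₂ : ℕ)
    (h1 : m₁ < p) (h2 : p < m₂) (h3 : m₂ ≤ n)
    (R₀ : ℝ) (c : Fin n → ℝ) (B : Fin n → Fin n → ℝ)
    (i : Fin n → Bool)
    (hi : ∀ t : Fin n, i t = decide ((t : ℕ) < m₁ ∨ (p ≤ (t : ℕ) ∧ (t : ℕ) < m₂)))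
    (R : (Fin n → Bool) → ℝ)
    (hR : ∀ k, R k = R₀ - (∑ j : Fin n, c j * tv (k j))
        + ∑ j : Fin n, ∑ l : Fin n, (if (j : ℕ) < (l : ℕ) then tv (k j) * tv (k l) * B j l else 0))
    (A : ℝ)
    (hA : A = -R i + R (nestedBool n m₁) - R (nestedBool n p) + R (nestedBool n m₂)) :
    (A = ∑ j : Fin n, ∑ k : Fin n,
        (if m₁ ≤ (j : ℕ) ∧ (j : ℕ) < p ∧ p ≤ (k : ℕ) ∧ (k : ℕ) < m₂
         then B j k else 0)) ∧
    ((∀ j k : Fin n, (j : ℕ) < (k : ℕ) → 0 < B j k) → 0 < A) := by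

  have hpn : p < n := lt_of_lt_of_le h2 h3
  have hmn : m₁ < n := by omega
  have htv : ∀ t : Fin n, tv (i t) =
      tv (nestedBool n m₁ t) - tv (nestedBool n p t) + tv (nestedBool n m₂ t) := by
    intro t
    simp only [hi, nestedBool, tv, decide_eq_true_eq]
    split_ifs <;> first | omega | norm_num
  have hS : (∑ j : Fin n, c j * tv (i j)) =
      (∑ j : Fin n, c j * tv (nestedBool n m₁ j)) - (∑ j : Fin n, c j * tv (nestedBool n p j))
        + (∑ j : Fin n, c j * tv (nestedBool n m₂ j)) := by
    rw [← Finset.sum_sub_distrib, ← Finset.sum_add_distrib]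
    exact Finset.sum_congr rfl fun t _ => by rw [htv t]; ring
  have hq : ∀ j l : Fin n, (j : ℕ) < (l : ℕ) →
      tv (nestedBool n m₁ j) * tv (nestedBool n m₁ l)
        - tv (nestedBool n p j) * tv (nestedBool n p l)
        + tv (nestedBool n m₂ j) * tv (nestedBool n m₂ l)
        - tv (i j) * tv (i l)
      = if m₁ ≤ (j : ℕ) ∧ (j : ℕ) < p ∧ p ≤ (l : ℕ) ∧ (l : ℕ) < m₂ then 1 else 0 := by
    intro j l hjl
    simp only [hi, nestedBool, tv, decide_eq_true_eq]
    split_ifs <;> first | omega | norm_num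
  have key : ∀ j l : Fin n,
      (if (j : ℕ) < (l : ℕ) then tv (nestedBool n m₁ j) * tv (nestedBool n m₁ l) * B j l else 0)
        - (if (j : ℕ) < (l : ℕ) then tv (nestedBool n p j) * tv (nestedBool n p l) * B j l else 0)
        + (if (j : ℕ) < (l : ℕ) then tv (nestedBool n m₂ j) * tv (nestedBool n m₂ l) * B j l else 0)
        - (if (j : ℕ) < (l : ℕ) then tv (i j) * tv (i l) * B j l else 0)
      = if m₁ ≤ (j : ℕ) ∧ (j : ℕ) < p ∧ p ≤ (l : ℕ) ∧ (l : ℕ) < m₂ then B j l else 0 := by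
    intro j l
    by_cases hjl : (j : ℕ) < (l : ℕ)
    · simp only [if_pos hjl]
      have hthis := hq j l hjl
      by_cases hc : m₁ ≤ (j : ℕ) ∧ (j : ℕ) < p ∧ p ≤ (l : ℕ) ∧ (l : ℕ) < m₂
      · rw [if_pos hc] at hthis ⊢
        linear_combination (B j l) * hthis
      · rw [if_neg hc] at hthis ⊢
        linear_combination (B j l) * hthis
    · simp only [if_neg hjl]
      have hc : ¬(m₁ ≤ (j : ℕ) ∧ (j : ℕ) < p ∧ p ≤ (l : ℕ) ∧ (l : ℕ) < m₂) := by omega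
      rw [if_neg hc]; ring
  have eq1 : (∑ j : Fin n, ∑ k : Fin n,
        (if m₁ ≤ (j : ℕ) ∧ (j : ℕ) < p ∧ p ≤ (k : ℕ) ∧ (k : ℕ) < m₂ then B j k else 0))
      = (∑ j : Fin n, ∑ l : Fin n, (if (j : ℕ) < (l : ℕ) then
            tv (nestedBool n m₁ j) * tv (nestedBool n m₁ l) * B j l else 0))
        - (∑ j : Fin n, ∑ l : Fin n, (if (j : ℕ) < (l : ℕ) then
            tv (nestedBool n p j) * tv (nestedBool n p l) * B j l else 0))
        + (∑ j : Fin n, ∑ l : Fin n, (if (j : ℕ) < (l : ℕ) then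
            tv (nestedBool n m₂ j) * tv (nestedBool n m₂ l) * B j l else 0))
        - (∑ j : Fin n, ∑ l : Fin n, (if (j : ℕ) < (l : ℕ) then
            tv (i j) * tv (i l) * B j l else 0)) := by
    rw [← Finset.sum_sub_distrib, ← Finset.sum_add_distrib, ← Finset.sum_sub_distrib]
    refine Finset.sum_congr rfl fun j _ => ?_
    rw [← Finset.sum_sub_distrib, ← Finset.sum_add_distrib, ← Finset.sum_sub_distrib]
    exact Finset.sum_congr rfl fun l _ => (key j l).symm
  have hmain : A = ∑ j : Fin n, ∑ k : Fin n,
      (if m₁ ≤ (j : ℕ) ∧ (j : ℕ) < p ∧ p ≤ (k : ℕ) ∧ (k : ℕ) < m₂ then B j k else 0) := by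
    rw [hA, hR, hR, hR, hR]
    rw [eq1, hS]
    ring
  refine ⟨hmain, fun hB => ?_⟩
  rw [hmain]
  have jm : m₁ < n := by omega
  apply Finset.sum_pos'
  · intro j _
    apply Finset.sum_nonneg
    intro l _
    split_ifs with hc
    · exact le_of_lt (hB j l (by omega))
    · exact le_refl 0
  · refine ⟨⟨m₁, jm⟩, Finset.mem_univ _, ?_⟩
    apply Finset.sum_pos'
    · intro l _
      split_ifs with hc
      · exact le_of_lt (hB _ l (by omega))
      · exact le_refl 0
    · refine ⟨⟨p, hpn⟩, Finset.mem_univ _, ?_⟩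
      rw [if_pos (by simp; omega)]
      exact hB _ _ (by simp; omega)
end

section
/- Under the pairwise-interaction fitness landscape R_i = R_0 − c·i + Σ_{j<k} i_j i_k B_{jk} with B_{jk} < 0 for all j < k, for every sequence i ∈ {0,1}^n with at most n−2 ones, the one-to-one invasion linear form A_i := −R_i − (|Λ_i| − 1) R_1 + Σ_{j∈Λ_i} R_{1−e_j} is strictly positive, where Λ_i = {j : i_j = 0}, R_1 is the fitness of the all-ones sequence, and R_{1−e_j} is the fitness of the sequence with a single 0 in position j. -/
/-- under a pairwise-interaction fitness landscape with all `B_{jk} < 0`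
(`j < k`), for every sequence `i` with at most `n-2` ones, the one-to-one invasion linear
form `A_i = -R_i - (|Λ_i| - 1) R_𝟙 + Σ_{j∈Λ_i} R_{𝟙-e_j}` is strictly positive, where
`Λ_i = {j : i_j = 0}`. -/
theorem stmt_15 {n : ℕ}
    (R₀ : ℝ) (c : Fin n → ℝ) (B : Fin n → Fin n → ℝ)
    (hB : ∀ j k : Fin n, (j : ℕ) < (k : ℕ) → B j k < 0)
    (R : (Fin n → Bool) → ℝ)
    (hR : ∀ k, R k = R₀ - (∑ j : Fin n, c j * tv (k j))
        + ∑ j : Fin n, ∑ l : Fin n, (if (j : ℕ) < (l : ℕ) then tv (k j) * tv (k l) * B j l else 0))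
    (i : Fin n → Bool)
    (hones : (Finset.univ.filter fun j => i j = true).card + 2 ≤ n) :
    0 < -R i
        - (((Finset.univ.filter fun j => i j = false).card : ℝ) - 1) * R (fun _ => true)
        + ∑ j ∈ Finset.univ.filter (fun j => i j = false),
            R (fun t => decide (t ≠ j)) := by
  classical
  set Λ : Finset (Fin n) := Finset.univ.filter (fun j => i j = false) with hΛ
  -- cardinality of Λ
  have hΛc : Λ.card = n - (Finset.univ.filter fun j => i j = true).card := by
    have h : Λ = (Finset.univ.filter fun j => i j = true)ᶜ := by
      ext j; simp [hΛ]
    rw [h, Finset.card_compl, Fintype.card_fin]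
  have h2 : 2 ≤ Λ.card := by omega
  -- the target positive quantity
  have hnn : ∀ p l : Fin n,
      0 ≤ (if (p : ℕ) < (l : ℕ) ∧ i p = false ∧ i l = false then -B p l else 0) := by
    intro p l
    split_ifs with h
    · have := hB p l h.1; linarith
    · exact le_rfl
  have hP : 0 < ∑ p : Fin n, ∑ l : Fin n,
      (if (p : ℕ) < (l : ℕ) ∧ i p = false ∧ i l = false then -B p l else 0) := by
    have main : ∀ x y : Fin n, x ∈ Λ → y ∈ Λ → (x : ℕ) < (y : ℕ) →
        0 < ∑ p : Fin n, ∑ l : Fin n,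
          (if (p : ℕ) < (l : ℕ) ∧ i p = false ∧ i l = false then -B p l else 0) := by
      intro x y hx hy hxy
      have hxf : i x = false := (Finset.mem_filter.mp hx).2
      have hyf : i y = false := (Finset.mem_filter.mp hy).2
      refine Finset.sum_pos' (fun p _ => Finset.sum_nonneg fun l _ => hnn p l)
        ⟨x, Finset.mem_univ x, Finset.sum_pos' (fun l _ => hnn x l)
          ⟨y, Finset.mem_univ y, ?_⟩⟩
      rw [if_pos ⟨hxy, hxf, hyf⟩]
      have := hB x y hxy; linarith
    obtain ⟨a, ha, b, hb, hab⟩ := Finset.one_lt_card.mp (by omega : 1 < Λ.card)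
    have hvab : (a : ℕ) ≠ (b : ℕ) := fun h => hab (Fin.val_injective h)
    rcases lt_or_gt_of_ne hvab with hlt | hgt
    · exact main a b ha hb hlt
    · exact main b a hb ha hgt
  -- fitness of the all-ones sequence
  have hR1 : R (fun _ => true) = R₀ - (∑ l : Fin n, c l)
      + ∑ p : Fin n, ∑ l : Fin n, (if (p : ℕ) < (l : ℕ) then B p l else 0) := by
    rw [hR]; simp [tv]
  -- linear part of R (1 - e_j)
  have hCj : ∀ j : Fin n,
      (∑ l : Fin n, c l * tv (decide (l ≠ j))) = (∑ l : Fin n, c l) - c j := by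
    intro j
    have h : ∀ l : Fin n, c l * tv (decide (l ≠ j)) = c l - (if l = j then c l else 0) := by
      intro l; by_cases h : l = j <;> simp [h, tv]
    rw [Finset.sum_congr rfl fun l _ => h l, Finset.sum_sub_distrib]
    simp
  -- quadratic part of R (1 - e_j)
  have hQj : ∀ j : Fin n,
      (∑ p : Fin n, ∑ l : Fin n,
        (if (p : ℕ) < (l : ℕ) then tv (decide (p ≠ j)) * tv (decide (l ≠ j)) * B p l else 0))
      = (∑ p : Fin n, ∑ l : Fin n, (if (p : ℕ) < (l : ℕ) then B p l else 0))
        - (∑ l : Fin n, (if (j : ℕ) < (l : ℕ) then B j l else 0))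
        - (∑ p : Fin n, (if (p : ℕ) < (j : ℕ) then B p j else 0)) := by
    intro j
    have inner : ∀ p : Fin n,
        (∑ l : Fin n, (if (p : ℕ) < (l : ℕ) then tv (decide (p ≠ j)) * tv (decide (l ≠ j)) * B p l else 0))
        = (∑ l : Fin n, (if (p : ℕ) < (l : ℕ) then B p l else 0))
          - (if p = j then (∑ l : Fin n, (if (j : ℕ) < (l : ℕ) then B j l else 0)) else 0)
          - (if (p : ℕ) < (j : ℕ) then B p j else 0) := by
      intro p
      by_cases hp : p = j
      · subst hp
        simp [tv]
      · have htv : tv (decide (p ≠ j)) = 1 := by simp [hp, tv]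
        rw [htv]
        have h : ∀ l : Fin n,
            (if (p : ℕ) < (l : ℕ) then 1 * tv (decide (l ≠ j)) * B p l else 0)
            = (if (p : ℕ) < (l : ℕ) then B p l else 0)
              - (if l = j then (if (p : ℕ) < (j : ℕ) then B p j else 0) else 0) := by
          intro l
          by_cases hl : l = j
          · subst hl; simp [tv]
          · simp [hl, tv]
        rw [Finset.sum_congr rfl fun l _ => h l, Finset.sum_sub_distrib]
        simp [hp]
    rw [Finset.sum_congr rfl fun p _ => inner p, Finset.sum_sub_distrib, Finset.sum_sub_distrib]
    simp
  -- fitness of 1 - e_j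
  have hRe : ∀ j : Fin n, R (fun t => decide (t ≠ j))
      = R₀ - ((∑ l : Fin n, c l) - c j)
        + ((∑ p : Fin n, ∑ l : Fin n, (if (p : ℕ) < (l : ℕ) then B p l else 0))
          - (∑ l : Fin n, (if (j : ℕ) < (l : ℕ) then B j l else 0))
          - (∑ p : Fin n, (if (p : ℕ) < (j : ℕ) then B p j else 0))) := by
    intro j
    rw [hR, hCj j, hQj j]
  -- splitting the sum over Λ
  have hsplit : (∑ j ∈ Λ, (R₀ - ((∑ l : Fin n, c l) - c j)
        + ((∑ p : Fin n, ∑ l : Fin n, (if (p : ℕ) < (l : ℕ) then B p l else 0))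
          - (∑ l : Fin n, (if (j : ℕ) < (l : ℕ) then B j l else 0))
          - (∑ p : Fin n, (if (p : ℕ) < (j : ℕ) then B p j else 0)))))
      = (Λ.card : ℝ) * (R₀ - (∑ l : Fin n, c l)
          + ∑ p : Fin n, ∑ l : Fin n, (if (p : ℕ) < (l : ℕ) then B p l else 0))
        + (∑ j ∈ Λ, c j)
        - (∑ j ∈ Λ, ((∑ l : Fin n, (if (j : ℕ) < (l : ℕ) then B j l else 0))
            + (∑ p : Fin n, (if (p : ℕ) < (j : ℕ) then B p j else 0)))) := by
    have h : ∀ j ∈ Λ, (R₀ - ((∑ l : Fin n, c l) - c j)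
        + ((∑ p : Fin n, ∑ l : Fin n, (if (p : ℕ) < (l : ℕ) then B p l else 0))
          - (∑ l : Fin n, (if (j : ℕ) < (l : ℕ) then B j l else 0))
          - (∑ p : Fin n, (if (p : ℕ) < (j : ℕ) then B p j else 0))))
        = (R₀ - (∑ l : Fin n, c l)
            + ∑ p : Fin n, ∑ l : Fin n, (if (p : ℕ) < (l : ℕ) then B p l else 0))
          + (c j - ((∑ l : Fin n, (if (j : ℕ) < (l : ℕ) then B j l else 0))
              + (∑ p : Fin n, (if (p : ℕ) < (j : ℕ) then B p j else 0)))) := by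
      intro j _; ring
    rw [Finset.sum_congr rfl h, Finset.sum_add_distrib, Finset.sum_const, nsmul_eq_mul,
      Finset.sum_sub_distrib]
    ring
  -- linear terms cancel
  have hc : (∑ j : Fin n, c j * tv (i j)) + (∑ j ∈ Λ, c j) = ∑ l : Fin n, c l := by
    rw [hΛ, Finset.sum_filter, ← Finset.sum_add_distrib]
    exact Finset.sum_congr rfl fun j _ => by cases hj : i j <;> simp [hj, tv]
  -- quadratic terms give the target
  have hPB : (∑ p : Fin n, ∑ l : Fin n, (if (p : ℕ) < (l : ℕ) then B p l else 0))
      - (∑ p : Fin n, ∑ l : Fin n, (if (p : ℕ) < (l : ℕ) then tv (i p) * tv (i l) * B p l else 0))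
      - (∑ j ∈ Λ, ((∑ l : Fin n, (if (j : ℕ) < (l : ℕ) then B j l else 0))
          + (∑ p : Fin n, (if (p : ℕ) < (j : ℕ) then B p j else 0))))
      = ∑ p : Fin n, ∑ l : Fin n,
          (if (p : ℕ) < (l : ℕ) ∧ i p = false ∧ i l = false then -B p l else 0) := by
    have h1 : (∑ j ∈ Λ, (∑ l : Fin n, (if (j : ℕ) < (l : ℕ) then B j l else 0)))
        = ∑ p : Fin n, ∑ l : Fin n,
            (if (p : ℕ) < (l : ℕ) then (1 - tv (i p)) * B p l else 0) := by
      rw [hΛ, Finset.sum_filter]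
      refine Finset.sum_congr rfl fun p _ => ?_
      cases hp : i p
      · simp [tv]
      · simp [tv]
    have h2 : (∑ j ∈ Λ, (∑ p : Fin n, (if (p : ℕ) < (j : ℕ) then B p j else 0)))
        = ∑ p : Fin n, ∑ l : Fin n,
            (if (p : ℕ) < (l : ℕ) then (1 - tv (i l)) * B p l else 0) := by
      rw [hΛ, Finset.sum_filter]
      have h : ∀ j : Fin n, (if i j = false then (∑ p : Fin n, (if (p : ℕ) < (j : ℕ) then B p j else 0)) else 0)
          = ∑ p : Fin n, (if (p : ℕ) < (j : ℕ) then (1 - tv (i j)) * B p j else 0) := by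
        intro j; cases hj : i j <;> simp [hj, tv]
      rw [Finset.sum_congr rfl fun j _ => h j, Finset.sum_comm]
    rw [Finset.sum_add_distrib, h1, h2, ← Finset.sum_add_distrib, ← Finset.sum_sub_distrib,
      ← Finset.sum_sub_distrib]
    refine Finset.sum_congr rfl fun p _ => ?_
    rw [← Finset.sum_add_distrib, ← Finset.sum_sub_distrib, ← Finset.sum_sub_distrib]
    refine Finset.sum_congr rfl fun l _ => ?_
    by_cases hpl : (p : ℕ) < (l : ℕ)
    · cases hp : i p <;> cases hl : i l <;> simp [hpl, hp, hl, tv]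
    · simp [hpl]
  -- put everything together
  have hA : -R i - ((Λ.card : ℝ) - 1) * R (fun _ => true)
      + (∑ j ∈ Λ, R (fun t => decide (t ≠ j)))
      = ∑ p : Fin n, ∑ l : Fin n,
          (if (p : ℕ) < (l : ℕ) ∧ i p = false ∧ i l = false then -B p l else 0) := by
    rw [hR i, hR1, Finset.sum_congr rfl fun j _ => hRe j, hsplit]
    linear_combination hc + hPB
  rw [hA]
  exact hP
end

section
/- Under the pairwise-interaction fitness landscape with B_{jk} < 0 for all j < k, for every i ∈ {0,1}^n with at least two ones, the ≤1-mutation invasion linear form A_i := −R_i − (n − |Λ_i| − 1) R_0 + Σ_{j∉Λ_i} R_{e_j} equals −Σ_{j<k} i_j i_k B_{jk}, hence is strictly positive. Here Λ_i = {j : i_j = 0}, R_0 is the fitness of the zero sequence and R_{e_j} the fitness of the sequence with a single 1 in position j. -/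
/-- under a pairwise-interaction fitness landscape with all `B_{jk} < 0`
(`j < k`), for every `i` with at least two ones, the ≤1-mutation invasion linear form
`A_i = -R_i - (n - |Λ_i| - 1) R_𝟘 + Σ_{j∉Λ_i} R_{e_j}` equals `-Σ_{j<k} i_j i_k B_{jk}`,
hence is strictly positive. -/
theorem stmt_16 {n : ℕ}
    (R₀ : ℝ) (c : Fin n → ℝ) (B : Fin n → Fin n → ℝ)
    (hB : ∀ j k : Fin n, (j : ℕ) < (k : ℕ) → B j k < 0)
    (R : (Fin n → Bool) → ℝ)
    (hR : ∀ k, R k = R₀ - (∑ j : Fin n, c j * tv (k j))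
        + ∑ j : Fin n, ∑ l : Fin n, (if (j : ℕ) < (l : ℕ) then tv (k j) * tv (k l) * B j l else 0))
    (i : Fin n → Bool)
    (hones : 2 ≤ (Finset.univ.filter fun j => i j = true).card)
    (A : ℝ)
    (hA : A = -R i
        - (((Finset.univ.filter fun j => i j = true).card : ℝ) - 1) * R (fun _ => false)
        + ∑ j ∈ Finset.univ.filter (fun j => i j = true),
            R (fun t => decide (t = j))) :
    (A = -∑ j : Fin n, ∑ k : Fin n,
        (if (j : ℕ) < (k : ℕ) then tv (i j) * tv (i k) * B j k else 0)) ∧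
    0 < A := by
  set s := Finset.univ.filter fun j => i j = true with hs
  have hR0 : R (fun _ => false) = R₀ := by
    rw [hR]; simp [tv]
  have hRe : ∀ j : Fin n, R (fun t => decide (t = j)) = R₀ - c j := by
    intro j
    rw [hR]
    have h1 : (∑ t : Fin n, c t * tv (decide (t = j))) = c j := by
      rw [Fintype.sum_eq_single j]
      · simp [tv]
      · intro t ht; simp [tv, ht]
    have h2 : (∑ t : Fin n, ∑ l : Fin n,
        (if (t : ℕ) < (l : ℕ) then tv (decide (t = j)) * tv (decide (l = j)) * B t l else 0)) = 0 := by
      apply Finset.sum_eq_zero; intro t _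
      apply Finset.sum_eq_zero; intro l _
      split_ifs with h
      · rcases eq_or_ne t j with ht | ht
        · rcases eq_or_ne l j with hl | hl
          · subst ht; subst hl; exact absurd h (lt_irrefl _)
          · simp [tv, hl]
        · simp [tv, ht]
      · rfl
    rw [h1, h2]; ring
  have hRi : R i = R₀ - (∑ j ∈ s, c j)
      + ∑ j : Fin n, ∑ l : Fin n, (if (j : ℕ) < (l : ℕ) then tv (i j) * tv (i l) * B j l else 0) := by
    rw [hR]
    congr 2
    rw [hs, Finset.sum_filter]
    apply Finset.sum_congr rfl
    intro j _
    cases hij : i j <;> simp [tv, hij]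
  have hsum : (∑ j ∈ s, R (fun t => decide (t = j))) = (s.card : ℝ) * R₀ - ∑ j ∈ s, c j := by
    rw [Finset.sum_congr rfl (fun j _ => hRe j), Finset.sum_sub_distrib, Finset.sum_const,
      nsmul_eq_mul]
  have hAeq : A = -∑ j : Fin n, ∑ k : Fin n,
      (if (j : ℕ) < (k : ℕ) then tv (i j) * tv (i k) * B j k else 0) := by
    rw [hA, hRi, hR0, hsum]; ring
  refine ⟨hAeq, ?_⟩
  rw [hAeq]
  rw [neg_pos]
  -- find two indices in s
  obtain ⟨a, ha, b, hb, hab⟩ := Finset.one_lt_card.mp hones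
  have ha' : i a = true := by simpa [hs] using ha
  have hb' : i b = true := by simpa [hs] using hb
  -- wlog a < b in ℕ
  have key : ∀ (a b : Fin n), i a = true → i b = true → (a : ℕ) < (b : ℕ) →
      (∑ j : Fin n, ∑ k : Fin n,
        (if (j : ℕ) < (k : ℕ) then tv (i j) * tv (i k) * B j k else 0)) < 0 := by
    intro a b ha' hb' hlt
    have hterm : ∀ j k : Fin n,
        (if (j : ℕ) < (k : ℕ) then tv (i j) * tv (i k) * B j k else 0) ≤ 0 := by
      intro j k
      split_ifs with h
      · cases hij : i j
        · simp [tv, hij]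
        · cases hik : i k
          · simp [tv, hik]
          · have := hB j k h
            simp only [hij, hik, tv, if_true, one_mul]
            linarith
      · exact le_refl 0
    have hinner : ∀ j : Fin n,
        (∑ k : Fin n, (if (j : ℕ) < (k : ℕ) then tv (i j) * tv (i k) * B j k else 0)) ≤ 0 := by
      intro j
      exact Finset.sum_nonpos fun k _ => hterm j k
    have hstricta : (∑ k : Fin n, (if (a : ℕ) < (k : ℕ) then tv (i a) * tv (i k) * B a k else 0)) < 0 := by
      have h0 : (∑ k : Fin n, (0:ℝ)) = 0 := by simp
      calc (∑ k : Fin n, (if (a : ℕ) < (k : ℕ) then tv (i a) * tv (i k) * B a k else 0))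
          < ∑ k : Fin n, (0:ℝ) := by
            apply Finset.sum_lt_sum (fun k _ => hterm a k)
            exact ⟨b, Finset.mem_univ b, by
              simp only [hlt, if_true, ha', hb', tv]
              simpa using hB a b hlt⟩
        _ = 0 := h0
    calc (∑ j : Fin n, ∑ k : Fin n,
          (if (j : ℕ) < (k : ℕ) then tv (i j) * tv (i k) * B j k else 0))
        < ∑ j : Fin n, (0:ℝ) := by
          apply Finset.sum_lt_sum (fun j _ => hinner j)
          exact ⟨a, Finset.mem_univ a, hstricta⟩
      _ = 0 := by simp
  rcases lt_or_gt_of_ne (fun h => hab (Fin.val_injective h)) with h | h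
  · exact key a b ha' hb' h
  · exact key b a hb' ha' h
end

section
/- Let x*, y*, z* be an equilibrium of the virus–immune system with persistent index sets Ω_y, Ω_z, satisfying Σ_{i∈Ω_y} a_{ij} y*_i = ρ_j for j ∈ Ω_z and Σ_{j∈Ω_z} a_{ij} z*_j = R_i x* − 1 for i ∈ Ω_y. If the equilibrium is the unique solution of this linear system in its positivity class (equivalently Ker((A')^T) ∩ (R')^⊥ = {0} and Ker(A') = {0}, where A' is the |Ω_y|×|Ω_z| submatrix and R' the restricted reproduction vector), then |Ω_y| = |Ω_z| or |Ω_y| = |Ω_z| + 1. -/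
open scoped RealInnerProductSpace

private lemma euc_sum_apply {ι κ : Type*} (s : Finset κ)
    (f : κ → EuclideanSpace ℝ ι) (i : ι) :
    (∑ k ∈ s, f k) i = ∑ k ∈ s, f k i :=
  by simp

/-- if an equilibrium with persistent index sets `Ω_y, Ω_z` (satisfying the
linear equilibrium equations) is the unique solution in its positivity class, i.e.
`Ker((A')ᵀ) ∩ (R')^⊥ = {0}` and `Ker(A') = {0}` for the restricted matrix `A'` and
restricted reproduction vector `R'`, then `|Ω_y| = |Ω_z|` or `|Ω_y| = |Ω_z| + 1`. -/
theorem stmt_19 {m n : ℕ} (A : Matrix (Fin m) (Fin n) ℝ)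
    (hA : ∀ i j, 0 ≤ A i j)
    (ρ : Fin n → ℝ) (hρ : ∀ j, 0 < ρ j)
    (R : Fin m → ℝ) (hR : ∀ i, 0 < R i)
    (x : ℝ) (hx : 0 < x)
    (Ωy : Finset (Fin m)) (Ωz : Finset (Fin n))
    (y : Fin m → ℝ) (z : Fin n → ℝ)
    (heq1 : ∀ j ∈ Ωz, ∑ i ∈ Ωy, A i j * y i = ρ j)
    (heq2 : ∀ i ∈ Ωy, ∑ j ∈ Ωz, A i j * z j = R i * x - 1)
    (hker1 : ∀ u : Fin m → ℝ, (∀ i, i ∉ Ωy → u i = 0) →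
        (∀ j ∈ Ωz, ∑ i ∈ Ωy, u i * A i j = 0) →
        (∑ i ∈ Ωy, u i * R i = 0) → ∀ i, u i = 0)
    (hker2 : ∀ v : Fin n → ℝ, (∀ j, j ∉ Ωz → v j = 0) →
        (∀ i ∈ Ωy, ∑ j ∈ Ωz, A i j * v j = 0) → ∀ j, v j = 0) :
    Ωy.card = Ωz.card ∨ Ωy.card = Ωz.card + 1 := by
  classical
  -- columns of the restricted matrix, as vectors in Euclidean space over Ωy
  set c : ↥Ωz → EuclideanSpace ℝ ↥Ωy := fun j => WithLp.toLp 2 (fun i => A i j) with hc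
  set r : EuclideanSpace ℝ ↥Ωy := WithLp.toLp 2 (fun i => R i) with hr
  have hrankE : Module.finrank ℝ (EuclideanSpace ℝ ↥Ωy) = Ωy.card := by
    rw [finrank_euclideanSpace, Fintype.card_coe]
  -- Step 1: linear independence of columns gives Ωz.card ≤ Ωy.card
  have hli : LinearIndependent ℝ c := by
    rw [Fintype.linearIndependent_iff]
    intro g hg j
    set v : Fin n → ℝ := fun j => if h : j ∈ Ωz then g ⟨j, h⟩ else 0 with hv
    have h0 : ∀ j, j ∉ Ωz → v j = 0 := fun j hj => by simp [hv, hj]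
    have h1 : ∀ i ∈ Ωy, ∑ j ∈ Ωz, A i j * v j = 0 := by
      intro i hi
      have h : ∑ x : ↥Ωz, g x * A i x = 0 := by
        have h' := congrFun (congrArg WithLp.ofLp hg) ⟨i, hi⟩
        rw [euc_sum_apply] at h'
        simpa [hc] using h'
      rw [← h, ← Finset.sum_attach Ωz fun j => A i j * v j]
      refine Finset.sum_congr rfl fun j _ => ?_
      simp [hv, hc, mul_comm]
    have := hker2 v h0 h1 j
    simpa [hv] using this
  have hle1 : Ωz.card ≤ Ωy.card := by
    have := hli.fintype_card_le_finrank
    rwa [hrankE, Fintype.card_coe] at this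
  -- Step 2: columns together with r span E, giving Ωy.card ≤ Ωz.card + 1
  set d : ↥Ωz ⊕ Unit → EuclideanSpace ℝ ↥Ωy := Sum.elim c (fun _ => r) with hd
  have hspan : Submodule.span ℝ (Set.range d) = ⊤ := by
    rw [← Submodule.orthogonal_eq_bot_iff]
    rw [Submodule.eq_bot_iff]
    intro u hu
    have hu' : ∀ k, ⟪d k, u⟫ = 0 := fun k =>
      hu (d k) (Submodule.subset_span (Set.mem_range_self k))
    set U : Fin m → ℝ := fun i => if h : i ∈ Ωy then u ⟨i, h⟩ else 0 with hU
    have h0 : ∀ i, i ∉ Ωy → U i = 0 := fun i hi => by simp [hU, hi]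
    have h1 : ∀ j ∈ Ωz, ∑ i ∈ Ωy, U i * A i j = 0 := by
      intro j hj
      have h := hu' (Sum.inl ⟨j, hj⟩)
      rw [hd] at h
      simp only [Sum.elim_inl, PiLp.inner_apply, RCLike.inner_apply, conj_trivial] at h
      rw [← h, ← Finset.sum_attach Ωy fun i => U i * A i j]
      refine Finset.sum_congr rfl fun i _ => ?_
      simp [hU, hc, mul_comm]
    have h2 : ∑ i ∈ Ωy, U i * R i = 0 := by
      have h := hu' (Sum.inr ())
      rw [hd] at h
      simp only [Sum.elim_inr, PiLp.inner_apply, RCLike.inner_apply, conj_trivial] at h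
      rw [← h, ← Finset.sum_attach Ωy fun i => U i * R i]
      refine Finset.sum_congr rfl fun i _ => ?_
      simp [hU, hr, mul_comm]
    have hz := hker1 U h0 h1 h2
    ext i
    have := hz i
    simpa [hU, i.2] using this
  have hle2 : Ωy.card ≤ Ωz.card + 1 := by
    have := finrank_le_of_span_eq_top hspan
    rwa [hrankE, Fintype.card_sum, Fintype.card_coe, Fintype.card_unit] at this
  omega
end
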